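/- Let Λ, T > 0 be real numbers and let (a_n)_{n∈ℤ} be complex numbers with Σ_{n∈ℤ}|a_n| < ∞ and a_{−n} = −a_n for all n. Define F(x,t) = Σ_{n∈ℤ} a_n e(nx/(2Λ) − n²t/T). Then for every real x: (i) F(x, T/2) = −F(Λ−x, 0); (ii) F(x, T/4) = ((1−i)/2)·F(x,0) − ((1+i)/2)·F(Λ−x,0); (iii) F(x, T/8) = ((1−i)/(2√2))·F(x,0) + (1/2)·F(x+Λ/2, 0) + ((1−i)/(2√2))·F(Λ−x, 0) − (1/2)·F(Λ/2−x, 0). -/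

import Mathlib

noncomputable def e (x : ℝ) : ℂ := Complex.exp (2 * Real.pi * Complex.I * x)

noncomputable def F (a : ℤ → ℂ) (Λ T x t : ℝ) : ℂ :=
  ∑' n : ℤ, a n * e (n * x / (2 * Λ) - n ^ 2 * t / T)

/-!
Each term of `F a Λ T x t` is `a n * e (n * x / (2 * Λ))` times the multiplier `e (-(n ^ 2 * t / T))`.
For `t = T / q` with `q = 2, 4, 8` the multiplier `e (-(n ^ 2 / q))` depends only on `n` modulo `2`
or `4`, so it is a linear combination of the characters `n ↦ e (± n / 4)`, `n ↦ e (± n / 2)`.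
Multiplying the coefficients by `e (n * s)` translates `x` by `2 * Λ * s`, and, since `a` is odd,
multiplying them by `-e (-(n * s))` reflects `x` to `2 * Λ * s - x`.
-/

open Complex

lemma e_add (u v : ℝ) : e (u + v) = e u * e v := by
  simp only [e, ← Complex.exp_add]
  push_cast
  ring_nf

lemma e_intCast (m : ℤ) : e m = 1 := by
  rw [e, ← Complex.exp_int_mul_two_pi_mul_I m]
  push_cast
  ring_nf

lemma e_zero : e 0 = 1 := by
  simpa using e_intCast 0

lemma e_eq_of_eq_intCast_add {u v : ℝ} (m : ℤ) (h : u = m + v) : e u = e v := by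
  rw [h, e_add, e_intCast, one_mul]

lemma norm_e (u : ℝ) : ‖e u‖ = 1 := by
  rw [e, show 2 * (Real.pi : ℂ) * I * u = (2 * Real.pi * u : ℝ) * I by push_cast; ring]
  exact Complex.norm_exp_ofReal_mul_I _

lemma e_half : e (1 / 2) = -1 := by
  rw [e, ← Complex.exp_pi_mul_I]
  push_cast
  ring_nf

lemma e_neg_quarter : e (-(1 / 4)) = -I := by
  rw [e, ← Complex.exp_neg_pi_div_two_mul_I]
  push_cast
  ring_nf

lemma e_neg_eighth : e (-(1 / 8)) = (1 - I) / Real.sqrt 2 := by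
  rw [e, show 2 * (Real.pi : ℂ) * I * ((-(1 / 8) : ℝ) : ℂ) = ((-(Real.pi / 4) : ℝ) : ℂ) * I by
    push_cast; ring, Complex.exp_mul_I, ← Complex.ofReal_cos, ← Complex.ofReal_sin,
    Real.cos_neg, Real.sin_neg, Real.cos_pi_div_four, Real.sin_pi_div_four]
  field_simp
  push_cast
  ring_nf
  rw [← Complex.ofReal_pow, Real.sq_sqrt zero_le_two]
  push_cast
  ring

lemma e_intCast_div_two_of_odd {n : ℤ} (hn : Odd n) : e (n / 2) = -1 := by
  obtain ⟨k, rfl⟩ := hn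
  rw [e_eq_of_eq_intCast_add k (v := 1 / 2) (by push_cast; ring), e_half]

lemma e_neg_intCast_div_two_of_even {n : ℤ} (hn : Even n) : e (-(n / 2)) = 1 := by
  obtain ⟨k, rfl⟩ := hn
  rw [e_eq_of_eq_intCast_add (-k) (v := 0) (by push_cast; ring), e_zero]

lemma e_neg_intCast_div_two_of_odd {n : ℤ} (hn : Odd n) : e (-(n / 2)) = -1 := by
  obtain ⟨k, rfl⟩ := hn
  rw [e_eq_of_eq_intCast_add (-k - 1) (v := 1 / 2) (by push_cast; ring), e_half]

lemma e_neg_sq_div_two (n : ℤ) : e (-((n : ℝ) ^ 2 / 2)) = e (-(n / 2)) := by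
  obtain ⟨k, hk⟩ := Int.even_mul_pred_self n
  have hk' : (n : ℝ) * (n - 1) = k + k := by exact_mod_cast hk
  exact e_eq_of_eq_intCast_add (-k) (by push_cast; linarith)

lemma e_neg_sq_div_four (n : ℤ) :
    e (-((n : ℝ) ^ 2 / 4)) = (1 - I) / 2 + (1 + I) / 2 * e (-(n / 2)) := by
  rcases Int.even_or_odd n with hn | hn
  · rw [e_neg_intCast_div_two_of_even hn]
    obtain ⟨k, rfl⟩ := hn
    rw [e_eq_of_eq_intCast_add (-k ^ 2) (v := 0) (by push_cast; ring), e_zero]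
    ring
  · rw [e_neg_intCast_div_two_of_odd hn]
    obtain ⟨k, rfl⟩ := hn
    rw [e_eq_of_eq_intCast_add (-(k ^ 2 + k)) (v := -(1 / 4)) (by push_cast; ring),
      e_neg_quarter]
    ring

lemma e_neg_sq_div_eight (n : ℤ) :
    e (-((n : ℝ) ^ 2 / 8)) = (1 - I) / (2 * Real.sqrt 2) + 1 / 2 * e (n / 4)
      - (1 - I) / (2 * Real.sqrt 2) * e (-(n / 2)) + 1 / 2 * e (-(n / 4)) := by
  rcases Int.even_or_odd n with ⟨k, rfl⟩ | hn
  · -- for `n = 2k` the multiplier is `e (-(k ^ 2 / 2)) = e (-(k / 2)) = e (k / 2)`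
    have hsq : e (-(((k + k : ℤ) : ℝ) ^ 2 / 8)) = e (-(k / 2)) := by
      rw [← e_neg_sq_div_two k]; push_cast; ring_nf
    have hpos : e (((k + k : ℤ) : ℝ) / 4) = e (-(k / 2)) :=
      e_eq_of_eq_intCast_add k (by push_cast; ring)
    have hneg : e (-(((k + k : ℤ) : ℝ) / 4)) = e (-(k / 2)) := by push_cast; ring_nf
    rw [hsq, hpos, hneg, e_neg_intCast_div_two_of_even ⟨k, rfl⟩]
    ring
  · -- for odd `n` the multiplier is constant and `e (n / 4) = -e (-(n / 4))`
    have hsq : e (-((n : ℝ) ^ 2 / 8)) = e (-(1 / 8)) := by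
      obtain ⟨k, rfl⟩ := hn
      obtain ⟨m, hm⟩ := Int.even_mul_succ_self k
      have hm' : (k : ℝ) * (k + 1) = m + m := by exact_mod_cast hm
      exact e_eq_of_eq_intCast_add (-m) (by push_cast; linarith)
    have hpos : e (n / 4) = -e (-(n / 4)) := by
      rw [← neg_one_mul, ← e_intCast_div_two_of_odd hn, ← e_add]
      ring_nf
    rw [hsq, hpos, e_neg_intCast_div_two_of_odd hn, e_neg_eighth]
    field_simp
    ring

section Series

variable {a : ℤ → ℂ} {Λ T : ℝ}

lemma summable_mul_e (ha : Summable fun n : ℤ => ‖a n‖) (f : ℤ → ℝ) :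
    Summable fun n : ℤ => a n * e (f n) :=
  Summable.of_norm (by simpa only [norm_mul, norm_e, mul_one] using ha)

lemma hasSum_F (ha : Summable fun n : ℤ => ‖a n‖) (x : ℝ) {t s : ℝ} (hs : t / T = s) :
    HasSum (fun n : ℤ => a n * e (n * x / (2 * Λ)) * e (-(n ^ 2 * s))) (F a Λ T x t) :=
  (summable_mul_e ha _).hasSum.congr_fun fun n => by
    rw [mul_assoc, ← e_add, ← hs]
    ring_nf

lemma hasSum_F_add (ha : Summable fun n : ℤ => ‖a n‖) (x : ℝ) {y s : ℝ} (hs : y / (2 * Λ) = s) :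
    HasSum (fun n : ℤ => a n * e (n * x / (2 * Λ)) * e (n * s)) (F a Λ T (x + y) 0) :=
  (summable_mul_e ha _).hasSum.congr_fun fun n => by
    rw [mul_assoc, ← e_add, ← hs]
    ring_nf

lemma hasSum_F_sub (ha : Summable fun n : ℤ => ‖a n‖) (hodd : ∀ n : ℤ, a (-n) = -a n)
    (x : ℝ) {y s : ℝ} (hs : y / (2 * Λ) = s) :
    HasSum (fun n : ℤ => -(a n * e (n * x / (2 * Λ)) * e (-(n * s)))) (F a Λ T (y - x) 0) :=
  ((Equiv.neg ℤ).hasSum_iff.mpr (summable_mul_e ha _).hasSum).congr_fun fun n => by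
    simp only [Function.comp_apply, Equiv.neg_apply, hodd, mul_assoc, ← e_add, ← hs]
    push_cast
    ring_nf

end Series

theorem stmt3 (Λ T : ℝ) (hΛ : 0 < Λ) (hT : 0 < T) (a : ℤ → ℂ)
    (ha : Summable fun n : ℤ => ‖a n‖) (hodd : ∀ n : ℤ, a (-n) = -a n) (x : ℝ) :
    F a Λ T x (T / 2) = -F a Λ T (Λ - x) 0 ∧
    F a Λ T x (T / 4) = (1 - Complex.I) / 2 * F a Λ T x 0
      - (1 + Complex.I) / 2 * F a Λ T (Λ - x) 0 ∧
    F a Λ T x (T / 8) = (1 - Complex.I) / (2 * Real.sqrt 2) * F a Λ T x 0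
      + (1 / 2) * F a Λ T (x + Λ / 2) 0
      + (1 - Complex.I) / (2 * Real.sqrt 2) * F a Λ T (Λ - x) 0
      - (1 / 2) * F a Λ T (Λ / 2 - x) 0 := by
  have hF (q : ℝ) (hq : q ≠ 0) := hasSum_F (Λ := Λ) ha x (by field_simp : T / q / T = 1 / q)
  have h0 := hasSum_F (Λ := Λ) ha x (zero_div T)
  simp only [mul_zero, neg_zero, e_zero, mul_one] at h0
  have hshift := hasSum_F_add (T := T) ha x (by field_simp; ring : Λ / 2 / (2 * Λ) = 1 / 4)
  have hrefl := hasSum_F_sub (T := T) ha hodd x (by field_simp : Λ / (2 * Λ) = 1 / 2)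
  have hrefl' := hasSum_F_sub (T := T) ha hodd x (by field_simp; ring : Λ / 2 / (2 * Λ) = 1 / 4)
  refine ⟨?_, ?_, ?_⟩
  · refine (hF 2 two_ne_zero).unique (hrefl.neg.congr_fun fun n => ?_)
    simp only [mul_one_div, neg_neg, e_neg_sq_div_two]
  · refine (hF 4 four_ne_zero).unique
      (((h0.mul_left _).sub (hrefl.mul_left _)).congr_fun fun n => ?_)
    simp only [mul_one_div, e_neg_sq_div_four]
    ring
  · refine (hF 8 (by norm_num)).unique (((((h0.mul_left _).add (hshift.mul_left _)).add
      (hrefl.mul_left _)).sub (hrefl'.mul_left _)).congr_fun fun n => ?_)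
    simp only [mul_one_div, e_neg_sq_div_eight]
    ring
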